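/- Let α ∈ ℝ be a real root of X⁴ − X − 1 and set K = ℚ(α) ⊂ ℂ. Then K is a number field of degree 4 over ℚ with exactly two real embeddings and exactly two (conjugate) non-real embeddings into ℂ, and there is no intermediate field T with ℚ ⊊ T ⊊ K. -/

import Mathlib

/-!
The degree and the embeddings come from `minpoly ℚ α = X⁴ - X - 1`: embeddings of `ℚ(α)` into `ℂ`
are the complex roots of this polynomial, and real embeddings are its real roots, of which there
are exactly two (one in `[-1, 0]`, one in `[1, 2]`, and no third since the derivative `4X³ - 1`
has a single real root).

For the intermediate fields: a field `ℚ ⊊ T ⊊ ℚ(α)` would have `[ℚ(α) : T] = [T : ℚ] = 2`, so the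
minimal polynomial of `α` over `T` would be a quadratic factor `X² + uX + v` of `X⁴ - X - 1`
over `T`. Comparing coefficients shows that `u²` is a root of the cubic resolvent `X³ + 4X - 1`,
which is irreducible over `ℚ`; its degree `3` would then divide `[T : ℚ] = 2`.
-/

open Polynomial IntermediateField Module

namespace Polynomial

variable {R : Type*} [CommRing R]

lemma Monic.eq_X_sq_add_C_mul_X_add_C {p : R[X]} (hp : p.Monic) (h2 : p.natDegree = 2) :
    p = X ^ 2 + C (p.coeff 1) * X + C (p.coeff 0) := by
  conv_lhs => rw [hp.as_sum, h2]
  simp only [Finset.sum_range_succ, Finset.sum_range_zero, pow_zero, pow_one, mul_one]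
  ring

lemma resolvent_eq_zero_of_quartic_eq_mul {a b u v s t : R}
    (h : (X ^ 4 + C a * X + C b : R[X]) = (X ^ 2 + C u * X + C v) * (X ^ 2 + C s * X + C t)) :
    (u ^ 2) ^ 3 - 4 * b * u ^ 2 - a ^ 2 = 0 := by
  rw [show (X ^ 2 + C u * X + C v) * (X ^ 2 + C s * X + C t) = X ^ 4 + C (u + s) * X ^ 3 +
      C (v + t + u * s) * X ^ 2 + C (u * t + v * s) * X + C (v * t) by
    simp only [map_add, map_mul]; ring] at h
  have h3 : 0 = u + s := by simpa [-map_add, -map_mul, coeff_X] using congrArg (coeff · 3) h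
  have h2 : 0 = v + t + u * s := by
    simpa [-map_add, -map_mul, coeff_X] using congrArg (coeff · 2) h
  have h1 : a = u * t + v * s := by
    simpa [-map_add, -map_mul, coeff_X] using congrArg (coeff · 1) h
  have h0 : b = v * t := by simpa [-map_add, -map_mul] using congrArg (coeff · 0) h
  -- with `s = -u`: `v + t = u²`, `u (t - v) = a`, and `u² ((v + t)² - (t - v)²) = 4 u² v t`
  linear_combination (-(u ^ 3 * (u ^ 2 + t + v) - v * (2 * u * (t - v) + v * (u + s)))) * h3 +
    u ^ 2 * (u ^ 2 + t + v) * h2 - (a + u * t + v * s) * h1 - 4 * u ^ 2 * h0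

lemma exists_resolvent_root_of_dvd_quartic [Nontrivial R] {a b : R} {m : R[X]}
    (hm : m.Monic) (h2 : m.natDegree = 2) (hdvd : m ∣ X ^ 4 + C a * X + C b) :
    ∃ w : R, w ^ 3 - 4 * b * w - a ^ 2 = 0 := by
  obtain ⟨m', hm'⟩ := hdvd
  have hm'_monic : m'.Monic := hm.of_mul_monic_left (hm' ▸ by monicity!)
  have hm'_deg : m'.natDegree = 2 := by
    have h4 : (X ^ 4 + C a * X + C b).natDegree = 4 := by compute_degree!
    have := hm.natDegree_mul hm'_monic
    rw [← hm', h4, h2] at this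
    omega
  rw [hm.eq_X_sq_add_C_mul_X_add_C h2, hm'_monic.eq_X_sq_add_C_mul_X_add_C hm'_deg] at hm'
  exact ⟨_, resolvent_eq_zero_of_quartic_eq_mul hm'⟩

lemma irreducible_X_pow_three_add_four_mul_X_sub_one : Irreducible (X ^ 3 + 4 * X - 1 : ℚ[X]) := by
  have hdeg : (X ^ 3 + 4 * X - 1 : ℚ[X]).natDegree = 3 := by compute_degree!
  rw [irreducible_iff_roots_eq_zero_of_degree_le_three (by omega) (by omega)]
  refine Multiset.eq_zero_of_forall_notMem fun x hx => ?_
  have hx : x ^ 3 + 4 * x - 1 = 0 := by simpa using (mem_roots'.mp hx).2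
  obtain ⟨n, rfl, hn⟩ := exists_integer_of_is_root_of_monic (p := (X ^ 3 + 4 * X - 1 : ℤ[X]))
    (by monicity!) (r := x) (by simpa [map_ofNat] using hx)
  have hn : n = 1 ∨ n = -1 := by
    simpa using Int.isUnit_iff.mp (isUnit_of_dvd_unit hn (by simp))
  rcases hn with rfl | rfl <;> norm_num at hx

end Polynomial

namespace IntermediateField

variable {F L : Type*} [Field F] [Field L] [Algebra F L]

theorem eq_bot_or_eq_top_or_finrank_eq_two (hL : finrank F L = 4) (T : IntermediateField F L) :
    T = ⊥ ∨ T = ⊤ ∨ finrank F T = 2 ∧ finrank T L = 2 := by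
  have : FiniteDimensional F L := Module.finite_of_finrank_eq_succ hL
  have htower := finrank_mul_finrank F T L
  rw [hL] at htower
  by_cases hbot : finrank F T = 1
  · exact .inl (finrank_eq_one_iff.mp hbot)
  by_cases htop : finrank T L = 1
  · exact .inr (.inl (finrank_eq_one_iff_eq_top.mp htop))
  have hpos : 0 < finrank F T := finrank_pos
  have hle : finrank F T ≤ 4 := Nat.le_of_dvd (by norm_num) ⟨_, htower.symm⟩
  refine .inr (.inr ?_)
  interval_cases h : finrank F T <;> omega

theorem eq_bot_or_eq_top_of_minpoly_eq_quartic {g : L} (hg : F⟮g⟯ = ⊤) {a b : F}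
    (hmin : minpoly F g = X ^ 4 + C a * X + C b)
    (hres : Irreducible (X ^ 3 - C (4 * b) * X - C (a ^ 2) : F[X]))
    (T : IntermediateField F L) : T = ⊥ ∨ T = ⊤ := by
  have hint : IsIntegral F g :=
    minpoly.ne_zero_iff.mp (by rw [hmin]; exact (by monicity! : Monic _).ne_zero)
  have hL : finrank F L = 4 := by
    rw [← finrank_top', ← hg, adjoin.finrank hint, hmin]; compute_degree!
  have : FiniteDimensional F L := Module.finite_of_finrank_eq_succ hL
  obtain h | h | ⟨hT, hTL⟩ := eq_bot_or_eq_top_or_finrank_eq_two hL T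
  · exact .inl h
  · exact .inr h
  have hgT : T⟮g⟯ = ⊤ := by
    rw [← restrictScalars_eq_top_iff (K := F), restrictScalars_adjoin_eq_sup, hg, sup_top_eq]
  have hdeg : (minpoly T g).natDegree = 2 := by
    rw [← adjoin.finrank hint.tower_top, hgT, finrank_top', hTL]
  have hdvd : minpoly T g ∣ X ^ 4 + C (algebraMap F T a) * X + C (algebraMap F T b) :=
    minpoly.dvd T g (by simpa [hmin] using minpoly.aeval F g)
  obtain ⟨w, hw⟩ := exists_resolvent_root_of_dvd_quartic (minpoly.monic hint.tower_top) hdeg hdvd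
  have hwmin : minpoly F w = X ^ 3 - C (4 * b) * X - C (a ^ 2) := by
    refine (minpoly.eq_of_irreducible_of_monic hres ?_ (by monicity!)).symm
    simpa only [map_sub, map_mul, map_pow, aeval_X, aeval_C, map_ofNat] using hw
  have h3_dvd_2 := minpoly.degree_dvd (IsIntegral.of_finite F w)
  rw [hwmin, hT, (by compute_degree! : (X ^ 3 - C (4 * b) * X - C (a ^ 2) : F[X]).natDegree = 3)]
    at h3_dvd_2
  omega

theorem adjoin_simple_gen_eq_top (z : L) : F⟮AdjoinSimple.gen F z⟯ = ⊤ :=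
  lift_injective _ (by rw [lift_adjoin_simple, lift_top]; rfl)

end IntermediateField

namespace NumberField.ComplexEmbedding

variable {K : Type*} [Field K]

def realEmbeddingEquiv : {φ : K →+* ℂ // IsReal φ} ≃ (K →+* ℝ) where
  toFun φ := φ.2.embedding
  invFun τ := ⟨Complex.ofRealHom.comp τ,
    isReal_iff.mpr (RingHom.ext fun x => by simp [conjugate_coe_eq])⟩
  left_inv φ := Subtype.ext (RingHom.ext fun x => by simp)
  right_inv τ := RingHom.ext fun x => by simp [IsReal.embedding]

theorem card_not_isReal [NumberField K] :
    Nat.card {φ : K →+* ℂ // ¬IsReal φ} = finrank ℚ K - Nat.card {φ : K →+* ℂ // IsReal φ} := by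
  classical
  simp only [Nat.card_eq_fintype_card, Fintype.card_subtype_compl, NumberField.Embeddings.card]

end NumberField.ComplexEmbedding

open NumberField.ComplexEmbedding in
theorem IntermediateField.card_isReal_adjoin_simple_eq_card_rootSet {E : Type*} [Field E]
    [Algebra ℚ E] {z : E} (hz : IsIntegral ℚ z) :
    Nat.card {φ : ℚ⟮z⟯ →+* ℂ // IsReal φ} = Nat.card ((minpoly ℚ z).rootSet ℝ) :=
  Nat.card_congr <| realEmbeddingEquiv.trans <|
    -- `algHomAdjoinIntegralEquiv` is stated for the `ℚ`-algebra structure inherited from `E`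
    (@RingHom.equivRatAlgHom _ _ _ _ ℚ⟮z⟯.algebra' _).trans <|
    (algHomAdjoinIntegralEquiv ℚ hz).trans <| Equiv.subtypeEquivRight fun x => by
      rw [rootSet_def, Finset.mem_coe, Multiset.mem_toFinset]

lemma card_rootSet_real_X_pow_four_sub_X_sub_one :
    Nat.card ((X ^ 4 - X - 1 : ℚ[X]).rootSet ℝ) = 2 := by
  have hne : (X ^ 4 - X - 1 : ℚ[X]) ≠ 0 := (by monicity! : Monic (X ^ 4 - X - 1 : ℚ[X])).ne_zero
  have hmem (x : ℝ) : x ∈ (X ^ 4 - X - 1 : ℚ[X]).rootSet ℝ ↔ x ^ 4 - x - 1 = 0 := by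
    simp [mem_rootSet, hne]
  have hcont : Continuous fun x : ℝ => x ^ 4 - x - 1 := by fun_prop
  obtain ⟨x₁, hx₁, hx₁_root⟩ := intermediate_value_Icc' (by norm_num : (-1 : ℝ) ≤ 0)
    hcont.continuousOn (show (0 : ℝ) ∈ Set.Icc _ _ by norm_num)
  obtain ⟨x₂, hx₂, hx₂_root⟩ := intermediate_value_Icc (by norm_num : (1 : ℝ) ≤ 2)
    hcont.continuousOn (show (0 : ℝ) ∈ Set.Icc _ _ by norm_num)
  have hlower : 2 ≤ Fintype.card ((X ^ 4 - X - 1 : ℚ[X]).rootSet ℝ) :=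
    Fintype.one_lt_card_iff.mpr ⟨⟨x₁, (hmem _).mpr hx₁_root⟩, ⟨x₂, (hmem _).mpr hx₂_root⟩,
      fun h => by linarith [congrArg Subtype.val h, hx₁.2, hx₂.1]⟩
  have hcube {x : ℝ} (hx : x ∈ (derivative (X ^ 4 - X - 1 : ℚ[X])).rootSet ℝ) : x ^ 3 = 4⁻¹ := by
    have h := (mem_rootSet.mp hx).2
    norm_num at h
    linarith
  have hderiv : Fintype.card ((derivative (X ^ 4 - X - 1 : ℚ[X])).rootSet ℝ) ≤ 1 :=
    Fintype.card_le_one_iff.mpr fun x y => Subtype.ext <|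
      (Odd.strictMono_pow (by decide : Odd 3)).injective ((hcube x.2).trans (hcube y.2).symm)
  have hrolle := card_rootSet_le_derivative (X ^ 4 - X - 1 : ℚ[X])
  rw [Nat.card_eq_fintype_card]
  omega

/-- Let `α ∈ ℝ` be a real root of `X⁴ − X − 1` and set `K = ℚ(α) ⊂ ℂ`. Then `K` is a
number field of degree `4` over `ℚ`, with exactly two real embeddings and exactly two
non-real embeddings into `ℂ`, and there is no intermediate field strictly between `ℚ`
and `K`. -/
theorem stmt12 (α : ℝ) (hα : α ^ 4 - α - 1 = 0)
    (K : IntermediateField ℚ ℂ)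
    (hK : K = IntermediateField.adjoin ℚ ({(α : ℂ)} : Set ℂ)) :
    NumberField K ∧ Module.finrank ℚ K = 4 ∧
      Nat.card {σ : K →+* ℂ // NumberField.ComplexEmbedding.IsReal σ} = 2 ∧
      Nat.card {σ : K →+* ℂ // ¬ NumberField.ComplexEmbedding.IsReal σ} = 2 ∧
      ∀ T : IntermediateField ℚ K, T = ⊥ ∨ T = ⊤ := by
  subst hK
  have hroot : aeval (α : ℂ) (X ^ 4 - X - 1 : ℚ[X]) = 0 := by
    simpa using congrArg (fun x : ℝ => (x : ℂ)) hα
  have hmin : minpoly ℚ (α : ℂ) = X ^ 4 - X - 1 := (minpoly.eq_of_irreducible_of_monic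
    (X_pow_sub_X_sub_one_irreducible_rat (by norm_num)) hroot (by monicity!)).symm
  have hint : IsIntegral ℚ (α : ℂ) := ⟨_, by monicity!, hroot⟩
  have hfin : FiniteDimensional ℚ ℚ⟮(α : ℂ)⟯ := adjoin.finiteDimensional hint
  have hnf : NumberField ℚ⟮(α : ℂ)⟯ := ⟨⟩
  have hdeg : finrank ℚ ℚ⟮(α : ℂ)⟯ = 4 := by
    rw [adjoin.finrank hint, hmin]; compute_degree!
  have hreal : Nat.card {σ : ℚ⟮(α : ℂ)⟯ →+* ℂ // NumberField.ComplexEmbedding.IsReal σ} = 2 := by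
    rw [card_isReal_adjoin_simple_eq_card_rootSet hint, hmin,
      card_rootSet_real_X_pow_four_sub_X_sub_one]
  refine ⟨hnf, hdeg, hreal, ?_, ?_⟩
  · rw [NumberField.ComplexEmbedding.card_not_isReal, hdeg, hreal]
  · refine eq_bot_or_eq_top_of_minpoly_eq_quartic (adjoin_simple_gen_eq_top _) (a := -1) (b := -1)
      ?_ ?_
    · -- `minpoly_gen` is stated for the `ℚ`-algebra structure inherited from `ℂ`
      convert (minpoly_gen ℚ (α : ℂ)).trans hmin using 2
      · exact Subsingleton.elim _ _
      · simp; ring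
    · convert irreducible_X_pow_three_add_four_mul_X_sub_one using 1
      simp [C_ofNat]
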